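/- arXiv:2401.09449 — 4 statements merged into one kernel-verified Lean document; each statement's English description precedes it below -/
import Mathlib

section
/- In any winning play of the game, the last member of Π to enter the exit room S for the final time does so via a move action D (not by being pushed). -/
/-- In any winning play, the last member of Π to enter the exit room S for the
final time does so via a move action D (not by being pushed).

Model: characters, indexed positions over time, change of room only via a move
D or a push by a character in the same room, pushing from the start tile
forbidden, Π the set of characters having occupied a non-blue room, winning
means everybody ends on the exit. -/
theorem last_entry_is_a_move
    (Agent Room : Type)
    (start exit : Room) (hse : start ≠ exit)
    (T : ℕ)
    (pos : Agent → ℕ → Room)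
    (movedD : Agent → ℕ → Prop)
    (pushed : Agent → Agent → ℕ → Prop)
    -- all characters start on the start tile D
    (hinit : ∀ c, pos c 0 = start)
    -- a character changes room only by its own move D or by being pushed
    (hchange : ∀ c t, pos c (t + 1) ≠ pos c t → movedD c t ∨ ∃ p, pushed p c t)
    -- a pusher is in the same room as the pushed character, and stays there
    (hpush_same : ∀ p c t, pushed p c t → pos p t = pos c t ∧ pos p (t + 1) = pos p t)
    -- pushing from the start tile D is forbidden
    (hpush_start : ∀ p c t, pushed p c t → pos p t ≠ start)
    -- Π : the characters that occupied a non-blue room at some point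
    (Pi : Set Agent)
    (hPi : ∀ c, c ∈ Pi ↔ ∃ t, t ≤ T ∧ pos c t ≠ start ∧ pos c t ≠ exit)
    -- the play is winning: all characters end in the exit S
    (hwin : ∀ c, pos c T = exit)
    -- `finalEntry c t` : c enters the exit at step t and stays there
    (finalEntry : Agent → ℕ → Prop)
    (hfe : ∀ c t, finalEntry c t ↔
      t < T ∧ pos c t ≠ exit ∧ ∀ s, t < s → s ≤ T → pos c s = exit)
    -- c is the last member of Π to enter the exit for the final time
    (c : Agent) (hc : c ∈ Pi) (t : ℕ) (hct : finalEntry c t)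
    (hlast : ∀ c' ∈ Pi, ∀ t', finalEntry c' t' → t' ≤ t) :
    movedD c t := by
  classical
  rw [hfe] at hct
  obtain ⟨htT, hne, hafter⟩ := hct
  have hchg : pos c (t + 1) ≠ pos c t := by
    rw [hafter (t+1) (Nat.lt_succ_self t) htT]
    exact fun h => hne h.symm
  rcases hchange c t hchg with hm | ⟨p, hp⟩
  · exact hm
  · exfalso
    obtain ⟨hsame, hstay⟩ := hpush_same p c t hp
    have hpne : pos p t ≠ exit := hsame ▸ hne
    have hps : pos p t ≠ start := hpush_start p c t hp
    have hpPi : p ∈ Pi := (hPi p).2 ⟨t, le_of_lt htT, hps, hpne⟩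
    have hp1 : pos p (t+1) ≠ exit := hstay ▸ hpne
    have ht1T : t + 1 ≤ T := htT
    have ht1T' : t + 1 ≠ T := fun h => hp1 (h ▸ hwin p)
    set t' := Nat.findGreatest (fun s => pos p s ≠ exit) T with ht'
    have hle : t + 1 ≤ t' := Nat.le_findGreatest ht1T hp1
    have hspec : pos p t' ≠ exit :=
      by
      have h := Nat.findGreatest_spec (P := fun s => pos p s ≠ exit) ht1T hp1
      exact h
    have ht'T : t' ≤ T := Nat.findGreatest_le T
    have ht'ltT : t' < T := lt_of_le_of_ne ht'T (fun h => hspec (h ▸ hwin p))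
    have hfep : finalEntry p t' := (hfe p t').2 ⟨ht'ltT, hspec, fun s hs hsT => by
      by_contra hne'
      exact absurd (Nat.le_findGreatest hsT hne') (not_le.2 hs)⟩
    exact absurd (hlast p hpPi t' hfep) (not_le.2 (lt_of_lt_of_le (Nat.lt_succ_self t) hle))
end

section
/- In any winning play with Π nonempty, some character in Π performs the move action D at least twice during the play. -/
/-- In any winning play with Π nonempty, some character of Π performs the move
action D at least twice during the play.

Model: characters, positions over time, change of room only via a move D or a
push by a character in the same room, pushing from the start tile forbidden,
Π the set of characters having occupied a non-blue room, winning means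
everybody ends on the exit. -/
theorem some_member_moves_twice
    (Agent Room : Type)
    (start exit : Room) (hse : start ≠ exit)
    (T : ℕ)
    (pos : Agent → ℕ → Room)
    (movedD : Agent → ℕ → Prop)
    (pushed : Agent → Agent → ℕ → Prop)
    (hinit : ∀ c, pos c 0 = start)
    (hchange : ∀ c t, pos c (t + 1) ≠ pos c t → movedD c t ∨ ∃ p, pushed p c t)
    (hpush_same : ∀ p c t, pushed p c t → pos p t = pos c t ∧ pos p (t + 1) = pos p t)
    (hpush_start : ∀ p c t, pushed p c t → pos p t ≠ start)
    (Pi : Set Agent)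
    (hPi : ∀ c, c ∈ Pi ↔ ∃ t, t ≤ T ∧ pos c t ≠ start ∧ pos c t ≠ exit)
    (hwin : ∀ c, pos c T = exit)
    (hne : Pi.Nonempty) :
    ∃ c ∈ Pi, ∃ t₁ t₂, t₁ ≠ t₂ ∧ movedD c t₁ ∧ movedD c t₂ :=  by
  classical
  -- τ c : last time (≤ T) at which c is not at exit
  set S : Agent → Set ℕ := fun c => {t | t ≤ T ∧ pos c t ≠ exit} with hS
  have hbdd : ∀ c, BddAbove (S c) := fun c => ⟨T, fun t ht => ht.1⟩
  have h0S : ∀ c, (0 : ℕ) ∈ S c := by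
    intro c
    refine ⟨Nat.zero_le _, ?_⟩
    rw [hinit c]; exact hse
  set τ : Agent → ℕ := fun c => sSup (S c) with hτ
  have hτmem : ∀ c, τ c ∈ S c := fun c => Nat.sSup_mem ⟨0, h0S c⟩ (hbdd c)
  have hτleT : ∀ c, τ c ≤ T := fun c => (hτmem c).1
  have hτne : ∀ c, pos c (τ c) ≠ exit := fun c => (hτmem c).2
  have hτlt : ∀ c, τ c < T := by
    intro c
    rcases lt_or_eq_of_le (hτleT c) with h | h
    · exact h
    · exact absurd (h ▸ hwin c) (hτne c)
  have hle : ∀ c t, t ∈ S c → t ≤ τ c := fun c t ht => le_csSup (hbdd c) ht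
  have hτexit : ∀ c, pos c (τ c + 1) = exit := by
    intro c
    by_contra h
    have : τ c + 1 ∈ S c := ⟨hτlt c, h⟩
    exact absurd (hle c _ this) (by omega)
  -- key: for c ∈ Pi, either c moves D at τ c, or some p ∈ Pi has larger τ
  have key : ∀ c ∈ Pi, movedD c (τ c) ∨ ∃ p ∈ Pi, τ c < τ p := by
    intro c hc
    have hch : pos c (τ c + 1) ≠ pos c (τ c) := by
      rw [hτexit c]; exact fun h => hτne c h.symm
    rcases hchange c (τ c) hch with hm | ⟨p, hp⟩
    · exact Or.inl hm
    · right
      obtain ⟨hsame, hstay⟩ := hpush_same p c (τ c) hp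
      have hpstart := hpush_start p c (τ c) hp
      have hpexit : pos p (τ c) ≠ exit := hsame ▸ hτne c
      have hp1 : pos p (τ c + 1) ≠ exit := by rw [hstay]; exact hpexit
      have hmem : τ c + 1 ∈ S p := ⟨hτlt c, hp1⟩
      refine ⟨p, ?_, by have := hle p _ hmem; omega⟩
      exact (hPi p).mpr ⟨τ c, le_of_lt (hτlt c), hpstart, hpexit⟩
  -- choose c ∈ Pi with maximal τ
  set N : Set ℕ := {n | ∃ c ∈ Pi, τ c = n} with hN
  have hNne : N.Nonempty := by obtain ⟨c, hc⟩ := hne; exact ⟨τ c, c, hc, rfl⟩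
  have hNbdd : BddAbove N := ⟨T, by rintro n ⟨c, hc, rfl⟩; exact hτleT c⟩
  obtain ⟨c, hc, hcmax⟩ : ∃ c ∈ Pi, τ c = sSup N := Nat.sSup_mem hNne hNbdd
  have hmoveτ : movedD c (τ c) := by
    rcases key c hc with hm | ⟨p, hp, hlt⟩
    · exact hm
    · have : τ p ≤ sSup N := le_csSup hNbdd ⟨p, hp, rfl⟩
      omega
  -- first departure from start is a move D
  obtain ⟨t₀, ht₀T, ht₀s, ht₀e⟩ := (hPi c).mp hc
  set F : Set ℕ := {t | pos c t ≠ start} with hF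
  have hFne : F.Nonempty := ⟨t₀, ht₀s⟩
  set s := sInf F with hs
  have hsmem : pos c s ≠ start := Nat.sInf_mem hFne
  have hspos : s ≠ 0 := fun h => hsmem (h ▸ hinit c)
  obtain ⟨k, hk⟩ : ∃ k, s = k + 1 := ⟨s - 1, by omega⟩
  have hkstart : pos c k = start := by
    by_contra h
    have : s ≤ k := Nat.sInf_le h
    omega
  have hkch : pos c (k + 1) ≠ pos c k := by
    rw [hkstart, ← hk]; exact hsmem
  have hmovek : movedD c k := by
    rcases hchange c k hkch with hm | ⟨p, hp⟩
    · exact hm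
    · obtain ⟨hsame, _⟩ := hpush_same p c k hp
      exact absurd (hsame.trans hkstart) (hpush_start p c k hp)
  have hst₀ : s ≤ t₀ := Nat.sInf_le ht₀s
  have ht₀τ : t₀ ≤ τ c := hle c t₀ ⟨ht₀T, ht₀e⟩
  exact ⟨c, hc, k, τ c, by omega, hmovek, hmoveτ⟩
end

section
/- No winning play of Room 25 can be completed in a single turn: with at most one move action D per character per turn, Π must be empty, but Π empty contradicts winning since the exit S is never adjacent to the start tile D at the beginning and no tile can be shifted while all characters remain on D. -/
private lemma const_of {Room : Type} (f : ℕ → Room) {a b : ℕ}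
    (hab : a ≤ b) (h : ∀ u, a ≤ u → u < b → f (u + 1) = f u) : f b = f a := by
  induction b, hab using Nat.le_induction with
  | base => rfl
  | succ b hb ih =>
    rw [h b hb (Nat.lt_succ_self b)]
    exact ih (fun u hu hub => h u hu (hub.trans (Nat.lt_succ_self b)))

/-- No winning play of Room 25 can be completed in a single turn.

Model: in a single turn each character performs at most one move D; a character
changes room only by its own move D (to an adjacent room) or by being pushed by
a character in the same room; pushing from the start tile is forbidden; the
(time-dependent, since rows and columns can be shifted) adjacency relation does
not change while every character remains on the start tile; initially the exit
S is not adjacent to the start tile D; winning means all characters end in S. -/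
theorem no_one_turn_win
    (Agent Room : Type) [Nonempty Agent]
    (start exit : Room) (hse : start ≠ exit)
    (T : ℕ)
    (pos : Agent → ℕ → Room)
    (movedD : Agent → ℕ → Prop)
    (pushed : Agent → Agent → ℕ → Prop)
    (adj : ℕ → Room → Room → Prop)
    (hinit : ∀ c, pos c 0 = start)
    (hchange : ∀ c t, pos c (t + 1) ≠ pos c t → movedD c t ∨ ∃ p, pushed p c t)
    (hpush_same : ∀ p c t, pushed p c t → pos p t = pos c t ∧ pos p (t + 1) = pos p t)
    (hpush_start : ∀ p c t, pushed p c t → pos p t ≠ start)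
    -- a move D goes to a room currently adjacent
    (hadjD : ∀ c t, movedD c t → pos c (t + 1) ≠ pos c t → adj t (pos c t) (pos c (t + 1)))
    -- the board cannot be shifted while all characters remain on D
    (hstable : ∀ t, (∀ c, ∀ s, s ≤ t → pos c s = start) → adj t = adj 0)
    -- at the beginning of the game S is never adjacent to D
    (hfar : ¬ adj 0 start exit)
    -- single turn: each character performs the move D at most once
    (honce : ∀ c t₁ t₂, movedD c t₁ → movedD c t₂ → t₁ = t₂) :
    ¬ ∀ c, pos c T = exit := by
  classical
  intro hwin
  -- Key: any change at time t < T is a move D by an agent that was at start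
  -- the whole time and jumps directly to exit.
  have key : ∀ k t, T - t ≤ k → t < T → ∀ a, pos a (t + 1) ≠ pos a t →
      movedD a t ∧ (∀ s, s ≤ t → pos a s = start) ∧ pos a (t + 1) = exit := by
    intro k
    induction k with
    | zero => intro t hk ht a _; omega
    | succ k ih =>
      intro t hk ht a hch
      have later : ∀ t', t < t' → t' < T → ∀ x, pos x (t' + 1) ≠ pos x t' →
          movedD x t' ∧ (∀ s, s ≤ t' → pos x s = start) ∧ pos x (t' + 1) = exit :=
        fun t' ht' hT' x hx => ih t' (by omega) hT' x hx
      -- Step 1: the change at t is a move D.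
      have hm : movedD a t := by
        rcases hchange a t hch with hm | ⟨p, hp⟩
        · exact hm
        · exfalso
          obtain ⟨hsame, hstay⟩ := hpush_same p a t hp
          have hpns := hpush_start p a t hp
          -- the pusher p never changes room after t
          have hpconst : ∀ u, t + 1 ≤ u → u < T → pos p (u + 1) = pos p u := by
            intro u hu hub
            by_contra hcu
            have h1 := (later u (by omega) hub p hcu).2.1 (t + 1) hu
            rw [hstay] at h1
            exact hpns h1
          have hpT : pos p T = pos p (t + 1) := const_of (pos p) (by omega) hpconst
          have hat : pos a t = exit := by
            rw [← hsame, ← hstay, ← hpT, hwin p]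
          -- a must change again after t, hence was at start at t : contradiction
          have haT : pos a T ≠ pos a (t + 1) := by
            rw [hwin a, ← hat]; exact fun h => hch h.symm
          have : ∃ u, t + 1 ≤ u ∧ u < T ∧ pos a (u + 1) ≠ pos a u := by
            by_contra hno
            push_neg at hno
            exact haT (const_of (pos a) (by omega)
              (fun u hu hub => hno u hu hub))
          obtain ⟨u, hu1, hu2, hu3⟩ := this
          have h2 := (later u (by omega) hu2 a hu3).2.1 t (by omega)
          rw [hat] at h2
          exact hse h2.symm
      -- Step 2: a was at start for all s ≤ t.
      have hstart : ∀ s, s ≤ t → pos a s = start := by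
        intro s
        induction s with
        | zero => intro _; exact hinit a
        | succ s ihs =>
          intro hs
          have h1 : pos a s = start := ihs (by omega)
          by_cases hc : pos a (s + 1) = pos a s
          · rw [hc, h1]
          · rcases hchange a s hc with hm' | ⟨p, hp⟩
            · have := honce a s t hm' hm; omega
            · exact absurd ((hpush_same p a s hp).1.trans h1) (hpush_start p a s hp)
      refine ⟨hm, hstart, ?_⟩
      -- Step 3: a never changes after t, so pos a (t+1) = pos a T = exit.
      have hconst : ∀ u, t + 1 ≤ u → u < T → pos a (u + 1) = pos a u := by
        intro u hu hub
        by_contra hcu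
        have h1 := (later u (by omega) hub a hcu).2.1 (t + 1) hu
        rw [h1, hstart t le_rfl] at hch
        exact hch rfl
      rw [← const_of (pos a) (by omega) hconst, hwin a]
  -- some change happens before T
  have hex : ∃ u, u < T ∧ ∃ a, pos a (u + 1) ≠ pos a u := by
    obtain ⟨c⟩ := ‹Nonempty Agent›
    by_contra hno
    push_neg at hno
    have : pos c T = pos c 0 :=
      const_of (pos c) (Nat.zero_le T) (fun u _ hub => hno u hub c)
    rw [hwin c, hinit c] at this
    exact hse this.symm
  -- first change time
  set t₀ := Nat.find hex with ht₀
  obtain ⟨htT, a, hach⟩ := Nat.find_spec hex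
  have hmin : ∀ u, u < t₀ → ∀ x, pos x (u + 1) = pos x u := by
    intro u hu x
    have := Nat.find_min hex hu
    push_neg at this
    exact this (by omega) x
  -- everyone is at start up to t₀
  have hallstart : ∀ c, ∀ s, s ≤ t₀ → pos c s = start := by
    intro c s
    induction s with
    | zero => intro _; exact hinit c
    | succ s ihs =>
      intro hs
      rw [hmin s (by omega) c]
      exact ihs (by omega)
  obtain ⟨hm, hstart, hexit⟩ := key (T - t₀) t₀ le_rfl htT a hach
  have hadj := hadjD a t₀ hm hach
  rw [hexit, hstart t₀ le_rfl, hstable t₀ hallstart] at hadj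
  exact hfar hadj
end

section
/- If tiles X and S satisfy the V-lucky configuration (S at [2;1], a harmless tile at [1;0] in some symmetry-transformed frame), then the sequence of actions D[1;0], C↑[1;], then D[2;1], C→[;1] moves the single character from [0;0] onto S and then shifts S (carrying the character) off the board, winning in exactly two turns. -/
/-- Orthogonal adjacency on the board `{-2,…,2}²`. -/
def adjCell (p q : ℤ × ℤ) : Prop := |p.1 - q.1| + |p.2 - q.2| = 1

/-- Cyclic shift of column `x` upwards by one (cells wrap from row 2 to row -2);
cells outside column `x` are unaffected. -/
def colShiftUp (x : ℤ) (p : ℤ × ℤ) : ℤ × ℤ :=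
  if p.1 = x then (p.1, if p.2 = 2 then -2 else p.2 + 1) else p

/-- Shift of row `y` to the right by one (a cell leaving `|x| ≤ 2` is off the
board); cells outside row `y` are unaffected. -/
def rowShiftRight (y : ℤ) (p : ℤ × ℤ) : ℤ × ℤ :=
  if p.2 = y then (p.1 + 1, p.2) else p

/-- In the V-lucky configuration (S at [2;1], harmless tile at [1;0]), the
sequence D[1;0], C↑[1;], D[2;1], C→[;1] moves the character from [0;0] onto S
and then shifts S (carrying the character) off the board: a win in two turns. -/
theorem swift_opening_wins (S : ℤ × ℤ) (hS : S = (2, 1)) :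
    -- turn 1: D[1;0] is a legal move from the start [0;0]
    adjCell (0, 0) (1, 0) ∧
    -- C↑[1;] carries the character (with its tile) to [1;1], leaving S in place
    colShiftUp 1 (1, 0) = (1, 1) ∧ colShiftUp 1 S = S ∧
    -- turn 2: D[2;1] is a legal move landing the character on S
    adjCell (1, 1) (2, 1) ∧ ((2, 1) : ℤ × ℤ) = S ∧
    -- C→[;1] shifts S, with the character aboard, off the 5-wide board: win
    rowShiftRight 1 S = (3, 1) ∧ ¬ |(rowShiftRight 1 S).1| ≤ 2 := by subst hS; refine ⟨by simp [adjCell], by decide, by decide, by simp [adjCell], rfl, by decide, by decide⟩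
end
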